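/- Let A be a Dedekind domain, q₁, q₂ ideals of A with q₂ nonzero, Γ = SL_2(A), Γ(q) the principal congruence subgroup of level q, and Δ(q₁) the normal subgroup of Γ generated by the elementary matrices T(a), a ∈ q₁. If Δ(q₁)·Γ(q₂) = Γ(q₁+q₂) holds, then a subgroup H of Γ containing Δ(q) for a nonzero ideal q is a congruence subgroup (i.e., contains Γ(q') for some nonzero ideal q') if and only if H contains Γ(q). -/
import Mathlib


open Matrix

variable (A : Type*) [CommRing A]

/-- The elementary matrix `T(a)` in `SL₂(A)`. -/
def Tsl (a : A) : Matrix.SpecialLinearGroup (Fin 2) A :=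
  ⟨!![1, a; 0, 1], by simp [Matrix.det_fin_two_of]⟩

/-- The principal congruence subgroup `Γ(𝔮)` of `SL₂(A)`:
the kernel of reduction modulo `𝔮`. -/
def GammaPCS (q : Ideal A) : Subgroup (Matrix.SpecialLinearGroup (Fin 2) A) :=
  MonoidHom.ker (Matrix.SpecialLinearGroup.map (Ideal.Quotient.mk q))

/-- `Δ(𝔮)`: the normal subgroup of `SL₂(A)` generated by the `T(a)`, `a ∈ 𝔮`. -/
def DeltaSL (q : Ideal A) : Subgroup (Matrix.SpecialLinearGroup (Fin 2) A) :=
  Subgroup.normalClosure {x | ∃ a ∈ q, x = Tsl A a}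


lemma GammaPCS_mono {A : Type*} [CommRing A] {q q' : Ideal A} (h : q ≤ q') :
    GammaPCS A q ≤ GammaPCS A q' := by
  intro M hM
  simp only [GammaPCS, MonoidHom.mem_ker] at hM ⊢
  ext i j
  have h1 : ((Matrix.SpecialLinearGroup.map (Ideal.Quotient.mk q)) M :
      Matrix (Fin 2) (Fin 2) (A ⧸ q)) i j
      = ((1 : Matrix.SpecialLinearGroup (Fin 2) (A ⧸ q)) :
        Matrix (Fin 2) (Fin 2) (A ⧸ q)) i j := by rw [hM]
  simp only [Matrix.SpecialLinearGroup.map_apply_coe, Matrix.map_apply,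
    Matrix.SpecialLinearGroup.coe_one] at h1 ⊢
  have h2 : Ideal.Quotient.mk q ((M : Matrix (Fin 2) (Fin 2) A) i j)
      = Ideal.Quotient.mk q ((1 : Matrix (Fin 2) (Fin 2) A) i j) := by
    simpa [RingHom.mapMatrix_apply, Matrix.map_apply, Matrix.one_apply, apply_ite] using h1
  have h3 : (M : Matrix (Fin 2) (Fin 2) A) i j - (1 : Matrix (Fin 2) (Fin 2) A) i j ∈ q :=
    Ideal.Quotient.eq.mp h2
  have h4 : Ideal.Quotient.mk q' ((M : Matrix (Fin 2) (Fin 2) A) i j)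
      = Ideal.Quotient.mk q' ((1 : Matrix (Fin 2) (Fin 2) A) i j) :=
    Ideal.Quotient.eq.mpr (h h3)
  simpa [RingHom.mapMatrix_apply, Matrix.map_apply, Matrix.one_apply, apply_ite] using h4

theorem congruence_iff_contains_Gamma (A : Type*) [CommRing A] [IsDomain A]
    [IsDedekindDomain A]
    (hLemma : ∀ (q₁ q₂ : Ideal A), q₂ ≠ ⊥ →
      DeltaSL A q₁ ⊔ GammaPCS A q₂ = GammaPCS A (q₁ + q₂))
    (H : Subgroup (Matrix.SpecialLinearGroup (Fin 2) A)) (q : Ideal A) (hq : q ≠ ⊥)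
    (hΔ : DeltaSL A q ≤ H) :
    (∃ q' : Ideal A, q' ≠ ⊥ ∧ GammaPCS A q' ≤ H) ↔ GammaPCS A q ≤ H := by
  constructor
  · rintro ⟨q', hq', hq'H⟩
    have hsum : GammaPCS A (q + q') ≤ H := by
      rw [← hLemma q q' hq']
      exact sup_le hΔ hq'H
    exact le_trans (GammaPCS_mono (le_sup_left : q ≤ q + q')) hsum
  · intro h
    exact ⟨q, hq, h⟩
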